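/- arXiv:alg-geom/9312007 — 2 statements merged into one kernel-verified Lean document; each statement's English description precedes it below -/
import Mathlib

section
/- Let g₀, g₁ : ℂ → ℂ be entire functions of finite order with g₁ nowhere vanishing, satisfying g₀² + g₁² = 1. Then g₀ and g₁ are constant. -/
/-!
Put `f = g₀ + i g₁`. Then `f · (g₀ - i g₁) = 1`, so `f` is a zero-free entire function of finite
order and has an entire logarithm `h`. The real part `log ‖f‖` of `h` grows at most polynomially,
Borel–Carathéodory upgrades this to a polynomial bound on `‖h‖`, and by the generalized Liouville
theorem `h` is a polynomial. Where `h` vanishes, `g₀ + i g₁ = 1 = g₀ - i g₁`, i.e. `g₁ = 0`; so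
`h` has no roots, hence is constant, and then so are `f`, `1 / f` and therefore `g₀` and `g₁`.
-/

open Complex Metric Polynomial

def HasFiniteOrder (g : ℂ → ℂ) : Prop :=
  ∃ lam C : ℝ, ∀ z, ‖g z‖ ≤ C * Real.exp ((1 + ‖z‖) ^ lam)

private lemma exp_one_add_norm_rpow_le (z : ℂ) {a b : ℝ} (hab : a ≤ b) :
    Real.exp ((1 + ‖z‖) ^ a) ≤ Real.exp ((1 + ‖z‖) ^ b) :=
  Real.exp_le_exp.mpr <| Real.rpow_le_rpow_of_exponent_le (by simp) hab

namespace HasFiniteOrder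

variable {f g h : ℂ → ℂ}

theorem add (hf : HasFiniteOrder f) (hg : HasFiniteOrder g) : HasFiniteOrder (f + g) := by
  obtain ⟨a, C, hC⟩ := hf
  obtain ⟨b, D, hD⟩ := hg
  refine ⟨max a b, |C| + |D|, fun z => ?_⟩
  have ha := exp_one_add_norm_rpow_le z (le_max_left a b)
  have hb := exp_one_add_norm_rpow_le z (le_max_right a b)
  calc ‖f z + g z‖ ≤ ‖f z‖ + ‖g z‖ := norm_add_le _ _
    _ ≤ |C| * Real.exp ((1 + ‖z‖) ^ a) + |D| * Real.exp ((1 + ‖z‖) ^ b) := by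
      gcongr
      · exact (hC z).trans (by gcongr; exact le_abs_self C)
      · exact (hD z).trans (by gcongr; exact le_abs_self D)
    _ ≤ (|C| + |D|) * Real.exp ((1 + ‖z‖) ^ max a b) := by
      rw [add_mul]; gcongr

theorem const_smul (c : ℂ) (hg : HasFiniteOrder g) : HasFiniteOrder (c • g) := by
  obtain ⟨a, C, hC⟩ := hg
  refine ⟨a, ‖c‖ * C, fun z => ?_⟩
  rw [Pi.smul_apply, norm_smul, mul_assoc]
  exact mul_le_mul_of_nonneg_left (hC z) (norm_nonneg c)

theorem exists_re_le (hf : HasFiniteOrder fun z => exp (h z)) :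
    ∃ (C : ℝ) (N : ℕ), ∀ z, (h z).re ≤ C * (1 + ‖z‖) ^ N := by
  obtain ⟨a, C, hC⟩ := hf
  have hCpos : 0 < C :=
    pos_of_mul_pos_left ((norm_pos_iff.mpr (exp_ne_zero _)).trans_le (hC 0)) (Real.exp_pos _).le
  refine ⟨|Real.log C| + 1, ⌈a⌉₊, fun z => ?_⟩
  have ht : 1 ≤ (1 + ‖z‖) ^ ⌈a⌉₊ := one_le_pow₀ (by simp)
  have hpow : (1 + ‖z‖) ^ a ≤ (1 + ‖z‖) ^ ⌈a⌉₊ := by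
    rw [← Real.rpow_natCast]
    exact Real.rpow_le_rpow_of_exponent_le (by simp) (Nat.le_ceil a)
  have hlog : (h z).re ≤ Real.log C + (1 + ‖z‖) ^ a := by
    rw [← Real.exp_le_exp, Real.exp_add, Real.exp_log hCpos, ← norm_exp]
    exact hC z
  nlinarith [le_abs_self (Real.log C), abs_nonneg (Real.log C)]

end HasFiniteOrder

theorem Differentiable.exists_norm_le_of_re_le {h : ℂ → ℂ} (hh : Differentiable ℂ h) {C : ℝ}
    {N : ℕ} (hre : ∀ z, (h z).re ≤ C * (1 + ‖z‖) ^ N) :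
    ∃ K : ℝ, ∀ z, ‖h z‖ ≤ K * (1 + ‖z‖) ^ N := by
  refine ⟨2 * (|C| + 1) * 3 ^ N + 3 * ‖h 0‖, fun z => ?_⟩
  set t := 1 + ‖z‖
  have ht : 1 ≤ t ^ N := one_le_pow₀ (by simp [t])
  -- Borel–Carathéodory on the disc of radius `2t`, where `‖z‖ / (2t - ‖z‖) ≤ 1`
  set M := (|C| + 1) * (1 + 2 * t) ^ N
  have hM : 0 < M := by positivity
  have hmaps : Set.MapsTo h (ball 0 (2 * t)) {w | w.re ≤ M} := fun w hw => by
    have hw : ‖w‖ < 2 * t := mem_ball_zero_iff.mp hw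
    calc (h w).re ≤ C * (1 + ‖w‖) ^ N := hre w
      _ ≤ (|C| + 1) * (1 + 2 * t) ^ N := by
        gcongr
        · linarith [le_abs_self C]
  have hz : z ∈ ball (0 : ℂ) (2 * t) := mem_ball_zero_iff.mpr (by linarith [norm_nonneg z])
  have hbc := borelCaratheodory hM hh.differentiableOn hmaps (by positivity) hz
  have h1 : ‖z‖ / (2 * t - ‖z‖) ≤ 1 := by
    rw [div_le_one (by linarith [norm_nonneg z])]; linarith [norm_nonneg z]
  have h3 : (2 * t + ‖z‖) / (2 * t - ‖z‖) ≤ 3 := by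
    rw [div_le_iff₀ (by linarith [norm_nonneg z])]; linarith [norm_nonneg z]
  have h3t : (1 + 2 * t) ^ N ≤ 3 ^ N * t ^ N := by
    rw [← mul_pow]; gcongr; linarith [norm_nonneg z]
  calc ‖h z‖ ≤ 2 * M * (‖z‖ / (2 * t - ‖z‖)) + ‖h 0‖ * ((2 * t + ‖z‖) / (2 * t - ‖z‖)) := by
        simpa only [mul_div_assoc] using hbc
    _ ≤ 2 * M * 1 + ‖h 0‖ * 3 := by gcongr
    _ ≤ (2 * (|C| + 1) * 3 ^ N + 3 * ‖h 0‖) * t ^ N := by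
      have : 0 ≤ ‖h 0‖ := norm_nonneg _
      nlinarith [mul_le_mul_of_nonneg_left h3t (by positivity : (0:ℝ) ≤ 2 * (|C| + 1))]

theorem Complex.differentiable_dslope {φ : ℂ → ℂ} (hφ : Differentiable ℂ φ) (c : ℂ) :
    Differentiable ℂ (dslope φ c) := fun z =>
  ((differentiableOn_dslope Filter.univ_mem).mpr hφ.differentiableOn z trivial).differentiableAt
    Filter.univ_mem

theorem Differentiable.exists_norm_dslope_le {φ : ℂ → ℂ} (hφ : Differentiable ℂ φ) {K : ℝ} {n : ℕ}
    (hb : ∀ z, ‖φ z‖ ≤ K * (1 + ‖z‖) ^ (n + 1)) :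
    ∃ K' : ℝ, ∀ z, ‖dslope φ 0 z‖ ≤ K' * (1 + ‖z‖) ^ n := by
  obtain ⟨M, hM⟩ := (isCompact_closedBall (0 : ℂ) 1).exists_bound_of_continuousOn
    (differentiable_dslope hφ 0).continuous.continuousOn
  have hφ0 : ‖φ 0‖ ≤ K := by simpa using hb 0
  have hK : 0 ≤ K := (norm_nonneg _).trans hφ0
  refine ⟨max M 0 + 4 * K, fun z => ?_⟩
  have ht : 1 ≤ (1 + ‖z‖) ^ n := one_le_pow₀ (by simp)
  rcases le_or_gt ‖z‖ 1 with hz | hz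
  · calc ‖dslope φ 0 z‖ ≤ max M 0 := (hM z (mem_closedBall_zero_iff.mpr hz)).trans (le_max_left _ _)
      _ ≤ (max M 0 + 4 * K) * (1 + ‖z‖) ^ n := by nlinarith [le_max_right M 0]
  · -- away from the unit disc, `dslope φ 0 z = (φ z - φ 0) / z` and `1 + ‖z‖ ≤ 2 ‖z‖`
    have hslope : ‖z‖ * ‖dslope φ 0 z‖ = ‖φ z - φ 0‖ := by
      rw [← norm_smul, ← sub_smul_dslope, sub_zero]
    have hnum : ‖φ z - φ 0‖ ≤ ‖z‖ * (4 * K * (1 + ‖z‖) ^ n) := by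
      calc ‖φ z - φ 0‖ ≤ K * (1 + ‖z‖) ^ (n + 1) + K := by
            linarith [norm_sub_le (φ z) (φ 0), hb z]
        _ ≤ 2 * K * (1 + ‖z‖) ^ (n + 1) := by
            nlinarith [one_le_pow₀ (n := n + 1) (by simp : (1 : ℝ) ≤ 1 + ‖z‖)]
        _ ≤ ‖z‖ * (4 * K * (1 + ‖z‖) ^ n) := by
            rw [pow_succ]; nlinarith [mul_nonneg hK (zero_le_one.trans ht)]
    have := le_of_mul_le_mul_left (hslope ▸ hnum) (by linarith)
    nlinarith [le_max_right M 0]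

theorem Differentiable.exists_polynomial_eq_of_norm_le {φ : ℂ → ℂ} (hφ : Differentiable ℂ φ)
    {K : ℝ} {n : ℕ} (hb : ∀ z, ‖φ z‖ ≤ K * (1 + ‖z‖) ^ n) :
    ∃ p : ℂ[X], ∀ z, φ z = p.eval z := by
  induction n generalizing φ K with
  | zero =>
    obtain ⟨c, hc⟩ := hφ.exists_const_forall_eq_of_bounded <|
      isBounded_iff_forall_norm_le.mpr ⟨K, by rintro _ ⟨z, rfl⟩; simpa using hb z⟩
    exact ⟨C c, by simpa using hc⟩
  | succ n ih =>
    obtain ⟨K', hK'⟩ := hφ.exists_norm_dslope_le hb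
    obtain ⟨q, hq⟩ := ih (differentiable_dslope hφ 0) hK'
    refine ⟨C (φ 0) + X * q, fun z => ?_⟩
    have := sub_smul_dslope φ 0 z
    rw [sub_zero, smul_eq_mul, hq] at this
    simp only [eval_add, eval_C, eval_mul, eval_X]
    linear_combination -this

theorem Differentiable.exists_eq_exp {f : ℂ → ℂ} (hf : Differentiable ℂ f) (hf₀ : ∀ z, f z ≠ 0) :
    ∃ h : ℂ → ℂ, Differentiable ℂ h ∧ ∀ z, f z = Complex.exp (h z) := by
  obtain ⟨h, hh0, hh⟩ := (hf.deriv.div hf hf₀).isExactOn_univ.with_val_at 0 (Complex.log (f 0))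
  have hh (z : ℂ) : HasDerivAt h (_root_.deriv f z / f z) z := hh z trivial
  have hderiv (z : ℂ) : HasDerivAt (fun z => f z * Complex.exp (-h z)) 0 z := by
    refine ((hf z).hasDerivAt.mul (hh z).neg.cexp).congr_deriv ?_
    field_simp [hf₀ z]
    ring
  have hconst (z : ℂ) : f z * Complex.exp (-h z) = 1 := by
    rw [is_const_of_deriv_eq_zero (fun z => (hderiv z).differentiableAt)
      (fun z => (hderiv z).deriv) z 0, hh0, exp_neg, exp_log (hf₀ 0), mul_inv_cancel₀ (hf₀ 0)]
  refine ⟨h, fun z => (hh z).differentiableAt, fun z => ?_⟩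
  rw [← mul_one (Complex.exp (h z)), ← hconst z, exp_neg]
  field_simp [exp_ne_zero (h z)]

theorem HasFiniteOrder.exists_polynomial_eq_exp {f : ℂ → ℂ} (hf : Differentiable ℂ f)
    (hf₀ : ∀ z, f z ≠ 0) (hfin : HasFiniteOrder f) :
    ∃ p : ℂ[X], ∀ z, f z = Complex.exp (p.eval z) := by
  obtain ⟨h, hh, hfh⟩ := hf.exists_eq_exp hf₀
  obtain ⟨C, N, hre⟩ := HasFiniteOrder.exists_re_le (h := h) (by simpa only [← hfh] using hfin)
  obtain ⟨K, hK⟩ := hh.exists_norm_le_of_re_le hre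
  obtain ⟨p, hp⟩ := hh.exists_polynomial_eq_of_norm_le hK
  exact ⟨p, fun z => by rw [hfh, hp]⟩

theorem Polynomial.eq_C_of_forall_eval_ne_zero {p : ℂ[X]} (hp : ∀ z, p.eval z ≠ 0) :
    p = C (p.coeff 0) :=
  eq_C_of_degree_le_zero <| not_lt.mp fun hdeg =>
    let ⟨z, hz⟩ := Complex.exists_root hdeg
    hp z hz

/-- **Green's Borel lemma, part b.** If `g₀`, `g₁` are entire
functions of finite order, `g₁` nowhere vanishing, and `g₀² + g₁² = 1`, then both
`g₀` and `g₁` are constant. -/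
theorem stmt11 (g₀ g₁ : ℂ → ℂ)
    (h₀ : Differentiable ℂ g₀) (h₁ : Differentiable ℂ g₁)
    (hfin₀ : ∃ lam C : ℝ, ∀ z, ‖g₀ z‖ ≤ C * Real.exp ((1 + ‖z‖) ^ lam))
    (hfin₁ : ∃ lam C : ℝ, ∀ z, ‖g₁ z‖ ≤ C * Real.exp ((1 + ‖z‖) ^ lam))
    (hnv : ∀ z, g₁ z ≠ 0)
    (heq : ∀ z, g₀ z ^ 2 + g₁ z ^ 2 = 1) :
    (∀ z w, g₀ z = g₀ w) ∧ (∀ z w, g₁ z = g₁ w) := by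
  have hfg (z : ℂ) : (g₀ z + I * g₁ z) * (g₀ z - I * g₁ z) = 1 := by
    linear_combination heq z - g₁ z ^ 2 * I_sq
  obtain ⟨p, hp⟩ := HasFiniteOrder.exists_polynomial_eq_exp (f := g₀ + I • g₁)
    (h₀.add (h₁.const_smul I)) (fun z => left_ne_zero_of_mul_eq_one (hfg z))
    (.add hfin₀ (.const_smul I hfin₁))
  simp only [Pi.add_apply, Pi.smul_apply, smul_eq_mul] at hp
  have hp₀ (z : ℂ) : p.eval z ≠ 0 := fun hz => hnv z <| by
    have hf1 : g₀ z + I * g₁ z = 1 := by rw [hp, hz, exp_zero]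
    have hg1 : g₀ z - I * g₁ z = 1 := by simpa [hf1] using hfg z
    simpa [I_ne_zero] using (by linear_combination hf1 - hg1 : 2 * I * g₁ z = 0)
  have hfc (z w : ℂ) : g₀ z + I * g₁ z = g₀ w + I * g₁ w := by
    rw [hp, hp, eq_C_of_forall_eval_ne_zero hp₀, eval_C, eval_C]
  have hgc (z w : ℂ) : g₀ z - I * g₁ z = g₀ w - I * g₁ w := by
    rw [eq_inv_of_mul_eq_one_right (hfg z), eq_inv_of_mul_eq_one_right (hfg w), hfc]
  refine ⟨fun z w => ?_, fun z w => ?_⟩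
  · linear_combination (hfc z w + hgc z w) / 2
  · refine mul_left_cancel₀ (mul_ne_zero two_ne_zero I_ne_zero) ?_
    linear_combination hfc z w - hgc z w
end

section
/- Let Q₁, Q₂, Q₃ ∈ ℂ[z₀,z₁,z₂] be homogeneous quadratic polynomials without common zeros in ℙ₂, and let f : ℂ → ℙ₂ be holomorphic with each Q_j∘f nowhere vanishing (for some/any lift of f). Suppose f(ℂ) ⊆ V(Q₁^{k₁}Q₂^{k₂}Q₃^{k₃} − α Q₁^{l₁}Q₂^{l₂}Q₃^{l₃}) with α ≠ 0, Σk_j = Σl_j = 4, and k_j = l_j for at least one j. Then f(ℂ) is contained in a curve {σQ_i − τQ_j = 0} for some i ≠ j and (σ,τ) ≠ (0,0), i.e. in a member of the pencil spanned by two of the quadrics. -/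
open MvPolynomial

/-! Cancelling the common factor `Q_m ^ k_m` turns the relation into
`Q_i ^ a * Q_j ^ b = α * Q_i ^ c * Q_j ^ d` with `a + b = c + d` and `a ≠ c`, hence into
`Q_i ^ r = α * Q_j ^ r` (or the same with `i`, `j` swapped). Then `Q_i / Q_j` is a continuous
function on the connected plane with values in the finite set of `r`-th roots of `α`, so it is
constant. -/

theorem pow_eq_mul_pow_of_pow_add_mul_pow_eq {K : Type*} [Field K] {x y α : K} (hx : x ≠ 0)
    (hy : y ≠ 0) {b c r : ℕ} (h : x ^ (c + r) * y ^ b = α * (x ^ c * y ^ (b + r))) :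
    x ^ r = α * y ^ r := by
  refine mul_left_cancel₀ (mul_ne_zero (pow_ne_zero c hx) (pow_ne_zero b hy)) ?_
  rw [pow_add, pow_add] at h
  linear_combination h

section Pencil

variable {X K : Type*} [TopologicalSpace X] [PreconnectedSpace X]
  [Field K] [TopologicalSpace K] [IsTopologicalDivisionRing K] [T1Space K]

theorem exists_eq_const_mul_of_pow_eq_mul_pow {p q : X → K} (hp : Continuous p)
    (hq : Continuous q) (hq₀ : ∀ x, q x ≠ 0) {r : ℕ} (hr : r ≠ 0) {β : K}
    (h : ∀ x, p x ^ r = β * q x ^ r) :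
    ∃ γ : K, ∀ x, p x = γ * q x := by
  rcases isEmpty_or_nonempty X with hX | ⟨⟨x₀⟩⟩
  · exact ⟨0, hX.elim⟩
  have hroots : Set.MapsTo (fun x => p x / q x) Set.univ (Polynomial.nthRootsFinset r β) :=
    fun x _ => by
      rw [Finset.mem_coe, Polynomial.mem_nthRootsFinset (Nat.pos_of_ne_zero hr), div_pow, h x,
        mul_div_cancel_right₀ _ (pow_ne_zero r (hq₀ x))]
  refine ⟨p x₀ / q x₀, fun x => ?_⟩
  have hconst : p x / q x = p x₀ / q x₀ :=
    isPreconnected_univ.constant_of_mapsTo (Finset.finite_toSet _).isDiscrete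
      (hp.div hq hq₀).continuousOn hroots (Set.mem_univ x) (Set.mem_univ x₀)
  rw [← hconst, div_mul_cancel₀ _ (hq₀ x)]

theorem exists_pencil_of_pow_mul_pow_eq {p q : X → K} (hp : Continuous p) (hq : Continuous q)
    (hp₀ : ∀ x, p x ≠ 0) (hq₀ : ∀ x, q x ≠ 0) {a b c d : ℕ} (hsum : a + b = c + d) (hac : a ≠ c)
    {α : K} (h : ∀ x, p x ^ a * q x ^ b = α * (p x ^ c * q x ^ d)) :
    ∃ σ τ : K, (σ, τ) ≠ (0, 0) ∧ ∀ x, σ * p x - τ * q x = 0 := by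
  rcases lt_or_gt_of_ne hac with hlt | hgt
  · obtain ⟨r, rfl⟩ := Nat.exists_eq_add_of_lt hlt
    obtain rfl : b = d + (r + 1) := by omega
    have hpow : ∀ x, q x ^ (r + 1) = α * p x ^ (r + 1) := fun x =>
      pow_eq_mul_pow_of_pow_add_mul_pow_eq (b := a) (c := d) (hq₀ x) (hp₀ x)
        (by linear_combination h x)
    obtain ⟨γ, hγ⟩ := exists_eq_const_mul_of_pow_eq_mul_pow hq hp hp₀ r.succ_ne_zero hpow
    exact ⟨γ, 1, by simp, fun x => by rw [hγ x]; ring⟩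
  · obtain ⟨r, rfl⟩ := Nat.exists_eq_add_of_lt hgt
    obtain rfl : d = b + (r + 1) := by omega
    have hpow : ∀ x, p x ^ (r + 1) = α * q x ^ (r + 1) := fun x =>
      pow_eq_mul_pow_of_pow_add_mul_pow_eq (b := b) (c := c) (hp₀ x) (hq₀ x)
        (by linear_combination h x)
    obtain ⟨γ, hγ⟩ := exists_eq_const_mul_of_pow_eq_mul_pow hp hq hq₀ r.succ_ne_zero hpow
    exact ⟨1, γ, by simp, fun x => by rw [hγ x]; ring⟩

variable {v : Fin 3 → X → K} {k l : Fin 3 → ℕ} {α : K}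

theorem exists_pencil_of_prod_pow_eq_of_apply_zero_eq (hv : ∀ j, Continuous (v j))
    (hv₀ : ∀ j x, v j x ≠ 0) (hsum : ∑ j, k j = ∑ j, l j) (hkl : k ≠ l) (h₀ : k 0 = l 0)
    (h : ∀ x, ∏ j, v j x ^ k j = α * ∏ j, v j x ^ l j) :
    ∃ i j : Fin 3, i ≠ j ∧ ∃ σ τ : K, (σ, τ) ≠ (0, 0) ∧ ∀ x, σ * v i x - τ * v j x = 0 := by
  simp only [Fin.sum_univ_three, Fin.prod_univ_three] at hsum h
  have h₁ : k 1 ≠ l 1 := fun h₁ => hkl <| by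
    ext j
    fin_cases j <;> simp only [Fin.zero_eta, Fin.mk_one, Fin.reduceFinMk] <;> omega
  refine ⟨1, 2, by decide, exists_pencil_of_pow_mul_pow_eq (hv 1) (hv 2) (hv₀ 1) (hv₀ 2)
    (b := k 2) (d := l 2) (α := α) (by omega) h₁
    fun x => mul_left_cancel₀ (pow_ne_zero (k 0) (hv₀ 0 x)) ?_⟩
  rw [h₀] at h ⊢
  linear_combination h x

theorem exists_pencil_of_prod_pow_eq (hv : ∀ j, Continuous (v j)) (hv₀ : ∀ j x, v j x ≠ 0)
    (hsum : ∑ j, k j = ∑ j, l j) (hkl : k ≠ l) {m : Fin 3} (hm : k m = l m)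
    (h : ∀ x, ∏ j, v j x ^ k j = α * ∏ j, v j x ^ l j) :
    ∃ i j : Fin 3, i ≠ j ∧ ∃ σ τ : K, (σ, τ) ≠ (0, 0) ∧ ∀ x, σ * v i x - τ * v j x = 0 := by
  set e := Equiv.swap 0 m
  obtain ⟨i, j, hij, σ, τ, hστ, hpencil⟩ :=
    exists_pencil_of_prod_pow_eq_of_apply_zero_eq
      (v := v ∘ e) (k := k ∘ e) (l := l ∘ e) (α := α)
      (fun j => hv (e j)) (fun j => hv₀ (e j))
      (by simpa only [Function.comp_apply, Equiv.sum_comp] using hsum)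
      (mt (fun h => e.surjective.injective_comp_right h) hkl)
      (by simpa [e] using hm)
      fun x => (Equiv.prod_comp e fun j => v j x ^ k j).trans <|
        (h x).trans (congrArg _ (Equiv.prod_comp e fun j => v j x ^ l j).symm)
  exact ⟨e i, e j, e.injective.ne hij, σ, τ, hστ, hpencil⟩

end Pencil

theorem stmt13_general (Q : Fin 3 → MvPolynomial (Fin 3) ℂ)
    (F : ℂ → Fin 3 → ℂ)
    (hF : ∀ i, Differentiable ℂ fun z => F z i)
    (hFnz : ∀ z j, eval (F z) (Q j) ≠ 0)
    (α : ℂ) (k l : Fin 3 → ℕ)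
    (hk : k 0 + k 1 + k 2 = 4) (hl : l 0 + l 1 + l 2 = 4)
    (hkl : k ≠ l) (hagree : ∃ j, k j = l j)
    (hrel : ∀ z, ∏ j, eval (F z) (Q j) ^ k j = α * ∏ j, eval (F z) (Q j) ^ l j) :
    ∃ i j : Fin 3, i ≠ j ∧ ∃ σ τ : ℂ, (σ, τ) ≠ (0, 0) ∧
      ∀ z, σ * eval (F z) (Q i) - τ * eval (F z) (Q j) = 0 := by
  have hFc : Continuous F := continuous_pi fun i => (hF i).continuous
  obtain ⟨m, hm⟩ := hagree
  exact exists_pencil_of_prod_pow_eq (fun j => (continuous_eval (Q j)).comp hFc)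
    (fun j z => hFnz z j)
    (by simp only [Fin.sum_univ_three]; omega) hkl hm hrel

/-- Let `Q₁, Q₂, Q₃` be quadratic forms without common zeros in `ℙ₂`
and `f : ℂ → ℙ₂` holomorphic with each `Q_j∘f` nowhere vanishing. If
`f(ℂ) ⊆ V(Q₁^{k₁}Q₂^{k₂}Q₃^{k₃} − α Q₁^{l₁}Q₂^{l₂}Q₃^{l₃})` where `α ≠ 0`,
`Σk_j = Σl_j = 4`, the two (distinct) exponent vectors agree in at least one entry,
then `f(ℂ)` lies in a member `{σQ_i − τQ_j = 0}` of a pencil spanned by two of the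
quadrics. -/
theorem stmt13 (Q : Fin 3 → MvPolynomial (Fin 3) ℂ)
    (hhom : ∀ j, (Q j).IsHomogeneous 2)
    (hnc : ∀ z : Fin 3 → ℂ, z ≠ 0 → ∃ j, eval z (Q j) ≠ 0)
    (F : ℂ → Fin 3 → ℂ)
    (hF : ∀ i, Differentiable ℂ fun z => F z i)
    (hFnz : ∀ z j, eval (F z) (Q j) ≠ 0)
    (α : ℂ) (hα : α ≠ 0) (k l : Fin 3 → ℕ)
    (hk : k 0 + k 1 + k 2 = 4) (hl : l 0 + l 1 + l 2 = 4)
    (hkl : k ≠ l) (hagree : ∃ j, k j = l j)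
    (hrel : ∀ z, ∏ j, eval (F z) (Q j) ^ k j = α * ∏ j, eval (F z) (Q j) ^ l j) :
    ∃ i j : Fin 3, i ≠ j ∧ ∃ σ τ : ℂ, (σ, τ) ≠ (0, 0) ∧
      ∀ z, σ * eval (F z) (Q i) - τ * eval (F z) (Q j) = 0 :=
  stmt13_general Q F hF hFnz α k l hk hl hkl hagree hrel
end
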